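/- arXiv:1704.00899 — 2 statements merged into one kernel-verified Lean document; each statement's English description precedes it below -/
import Mathlib

section
/- Let G be a bipartite graph, M a maximum matching in G, and 𝓔, 𝓞 the sets of even and odd vertices with respect to M. Then in every maximum matching N of G, every vertex of 𝓞 is matched, and its partner in N belongs to 𝓔. -/
open SimpleGraph

variable {V : Type*}

/-- `M` is a matching in the graph `G`: a set of edges of `G` no two of which
share a vertex. -/
def IsMatchingIn (G : SimpleGraph V) (M : Set (Sym2 V)) : Prop :=
  M ⊆ G.edgeSet ∧ ∀ e ∈ M, ∀ f ∈ M, e ≠ f → ∀ v : V, v ∈ e → v ∉ f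

/-- A vertex `v` is matched (covered) by the matching `M`. -/
def IsMatchedBy (M : Set (Sym2 V)) (v : V) : Prop :=
  ∃ e ∈ M, v ∈ e

/-- The list of edges of a path given as a list of vertices. -/
def pathEdges (p : List V) : List (Sym2 V) :=
  (p.zip p.tail).map fun q => s(q.1, q.2)

/-- `p` is an alternating path from `u` to `v` in `G` with respect to the matching `M`:
its consecutive vertices are adjacent in `G`, it repeats no vertex, and its edges
alternate between edges in `M` and edges not in `M`. -/
def IsAltPath (G : SimpleGraph V) (M : Set (Sym2 V)) (u v : V) (p : List V) : Prop :=
  p.Chain' G.Adj ∧ p.Nodup ∧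
    (pathEdges p).Chain' (fun e f => (e ∈ M ↔ f ∉ M)) ∧
    p.head? = some u ∧ p.getLast? = some v

/-- `v` is even with respect to `M`: there is an even-length alternating path from
an `M`-unmatched vertex to `v`. -/
def EvenVtx (G : SimpleGraph V) (M : Set (Sym2 V)) (v : V) : Prop :=
  ∃ u p, ¬ IsMatchedBy M u ∧ IsAltPath G M u v p ∧ Even (pathEdges p).length

/-- `v` is odd with respect to `M`: there is an odd-length alternating path from
an `M`-unmatched vertex to `v`. -/
def OddVtx (G : SimpleGraph V) (M : Set (Sym2 V)) (v : V) : Prop :=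
  ∃ u p, ¬ IsMatchedBy M u ∧ IsAltPath G M u v p ∧ Odd (pathEdges p).length

/-- `v` is unreachable with respect to `M`: there is no alternating path from any
`M`-unmatched vertex to `v`. -/
def UnreachableVtx (G : SimpleGraph V) (M : Set (Sym2 V)) (v : V) : Prop :=
  ¬ ∃ u p, ¬ IsMatchedBy M u ∧ IsAltPath G M u v p

/-- `M` is a maximum (cardinality) matching in `G`. -/
def IsMaxMatching (G : SimpleGraph V) (M : Set (Sym2 V)) : Prop :=
  IsMatchingIn G M ∧ ∀ N, IsMatchingIn G N → N.ncard ≤ M.ncard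

/-- `G` is bipartite with the two sides given by `side`. -/
def IsBipartiteWith (G : SimpleGraph V) (side : V → Bool) : Prop :=
  ∀ u v, G.Adj u v → side u ≠ side v

/-!
Let `O` and `E` be the odd and even vertices for `M`, and `U` the remaining ones. Extending or
truncating alternating paths shows that every neighbour of an even vertex is odd and that the
`M`-partner of an odd vertex is even. Since `M` has no augmenting path, odd vertices are
`M`-matched; walking back along an even alternating path to a vertex that is also odd would end at
an unmatched odd vertex, so `O` and `E` are disjoint. Counting matched vertices then gives
`2|M| ≥ 2|O| + |U|`, while in any matching `N` the `N`-partners of the `N`-matched even vertices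
are distinct odd vertices, whence `2|N| + #{x ∈ O not N-matched into E} ≤ 2|O| + |U|`. As
`|N| = |M|`, every odd vertex is `N`-matched into `E`.
-/

open scoped symmDiff

namespace IsMatchingIn

variable {G : SimpleGraph V} {K : Set (Sym2 V)}

theorem eq_of_mem_of_mem (hK : IsMatchingIn G K) {e f : Sym2 V} (he : e ∈ K) (hf : f ∈ K)
    {x : V} (hxe : x ∈ e) (hxf : x ∈ f) : e = f :=
  by_contra fun hne => hK.2 e he f hf hne x hxe hxf

theorem eq_of_mk_mem (hK : IsMatchingIn G K) {x y z : V} (hy : s(x, y) ∈ K) (hz : s(x, z) ∈ K) :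
    y = z :=
  Sym2.congr_right.1 (hK.eq_of_mem_of_mem hy hz (Sym2.mem_mk_left _ _) (Sym2.mem_mk_left _ _))

end IsMatchingIn

theorem isMatchedBy_iff {K : Set (Sym2 V)} {x : V} : IsMatchedBy K x ↔ ∃ y, s(x, y) ∈ K := by
  constructor
  · rintro ⟨e, he, hxe⟩
    obtain ⟨y, rfl⟩ := Sym2.mem_iff_exists.1 hxe
    exact ⟨y, he⟩
  · rintro ⟨y, hy⟩
    exact ⟨_, hy, Sym2.mem_mk_left _ _⟩

namespace IsMatchingIn

variable [Finite V] {G : SimpleGraph V} {K : Set (Sym2 V)} {S T : Set V}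

theorem ncard_setOf_isMatchedBy (hK : IsMatchingIn G K) :
    {x | IsMatchedBy K x}.ncard = 2 * K.ncard := by
  classical
  have hfin := K.toFinite
  have hunion : {x | IsMatchedBy K x} = ↑(hfin.toFinset.biUnion Sym2.toFinset) := by
    ext
    simp [IsMatchedBy, Sym2.mem_toFinset]
  rw [hunion, Set.ncard_coe_finset, Set.ncard_eq_toFinset_card K hfin, Finset.card_biUnion,
    Finset.card_eq_sum_ones, Finset.mul_sum, mul_one]
  · refine Finset.sum_congr rfl fun e he => ?_
    exact Sym2.card_toFinset_of_not_isDiag _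
      (G.not_isDiag_of_mem_edgeSet (hK.1 (hfin.mem_toFinset.1 he)))
  · intro e he f hf hne
    exact Finset.disjoint_left.2 fun x hxe hxf => hK.2 e (hfin.mem_toFinset.1 he) f
      (hfin.mem_toFinset.1 hf) hne x (Sym2.mem_toFinset.1 hxe) (Sym2.mem_toFinset.1 hxf)

theorem two_mul_ncard_add_le (hK : IsMatchingIn G K)
    (hT : ∀ x ∈ T, ∀ y, s(x, y) ∈ K → y ∈ S) :
    2 * K.ncard + (S \ {x | ∃ y ∈ T, s(x, y) ∈ K}).ncard ≤
      2 * S.ncard + (S ∪ T)ᶜ.ncard := by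
  set S' := {x | ∃ y ∈ T, s(x, y) ∈ K}
  set mK := {x | IsMatchedBy K x}
  have hcover : mK ⊆ S ∪ (mK ∩ T) ∪ (S ∪ T)ᶜ := by
    intro x hx
    by_cases hS : x ∈ S <;> by_cases hT : x ∈ T <;> simp [hx, hS, hT]
  have hmT : (mK ∩ T).ncard ≤ (S ∩ S').ncard := by
    have : ∀ x ∈ mK ∩ T, ∃ y, s(x, y) ∈ K := fun x hx => isMatchedBy_iff.1 hx.1
    choose! f hf using this
    refine Set.ncard_le_ncard_of_injOn f (fun x hx => ⟨hT x hx.2 _ (hf x hx), x, hx.2, ?_⟩)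
      (fun a ha b hb hab => hK.eq_of_mk_mem (Sym2.eq_swap ▸ hf a ha) ?_)
    · rw [Sym2.eq_swap]
      exact hf x hx
    · rw [hab, Sym2.eq_swap]
      exact hf b hb
  have hmK := (Set.ncard_le_ncard hcover).trans <|
    (Set.ncard_union_le _ _).trans (Nat.add_le_add_right (Set.ncard_union_le _ _) _)
  have := Set.ncard_inter_add_ncard_sdiff_eq_ncard S S'
  rw [hK.ncard_setOf_isMatchedBy] at hmK
  omega

theorem le_two_mul_ncard (hK : IsMatchingIn G K) (hST : Disjoint S T)
    (hS : ∀ x ∈ S, ∃ y ∈ T, s(x, y) ∈ K) (hU : ∀ x ∉ S ∪ T, IsMatchedBy K x) :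
    2 * S.ncard + (S ∪ T)ᶜ.ncard ≤ 2 * K.ncard := by
  choose! f hfT hfK using hS
  have hinj : Set.InjOn f S := fun a ha b hb hab =>
    hK.eq_of_mk_mem (by rw [Sym2.eq_swap]; exact hfK a ha)
      (by rw [hab, Sym2.eq_swap]; exact hfK b hb)
  have hfS : f '' S ⊆ T := Set.image_subset_iff.2 hfT
  have hdisj₁ : Disjoint S (f '' S) := hST.mono_right hfS
  have hdisj₂ : Disjoint (S ∪ f '' S) (S ∪ T)ᶜ :=
    disjoint_compl_right.mono_left (Set.union_subset_union_right S hfS)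
  have hsub : S ∪ f '' S ∪ (S ∪ T)ᶜ ⊆ {x | IsMatchedBy K x} := by
    rintro x ((hx | ⟨y, hy, rfl⟩) | hx)
    · exact isMatchedBy_iff.2 ⟨_, hfK x hx⟩
    · exact ⟨_, hfK y hy, Sym2.mem_mk_right _ _⟩
    · exact hU x hx
  have := Set.ncard_le_ncard hsub
  rw [Set.ncard_union_eq hdisj₂, Set.ncard_union_eq hdisj₁, hinj.ncard_image,
    hK.ncard_setOf_isMatchedBy] at this
  omega

end IsMatchingIn

theorem length_pathEdges (p : List V) : (pathEdges p).length = p.length - 1 := by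
  simp [pathEdges]

theorem getElem_pathEdges {p : List V} {i : ℕ} (hi : i + 1 < p.length) :
    (pathEdges p)[i]'(by rw [length_pathEdges]; omega) = s(p[i], p[i + 1]) := by
  simp [pathEdges]

theorem mem_pathEdges_iff {p : List V} {e : Sym2 V} :
    e ∈ pathEdges p ↔ ∃ i, ∃ hi : i + 1 < p.length, s(p[i], p[i + 1]) = e := by
  have hlen := length_pathEdges p
  rw [List.mem_iff_getElem]
  constructor
  · rintro ⟨i, hi, rfl⟩
    exact ⟨i, by omega, (getElem_pathEdges _).symm⟩
  · rintro ⟨i, hi, rfl⟩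
    exact ⟨i, by omega, getElem_pathEdges hi⟩

theorem IsBipartiteWith.side_getElem_eq_iff_even {G : SimpleGraph V} {side : V → Bool}
    (hG : IsBipartiteWith G side) {p : List V} (hp : p.IsChain G.Adj) :
    ∀ {i} (hi : i < p.length), side p[i] = side (p[0]'(by omega)) ↔ Even i
  | 0, _ => by simp
  | i + 1, hi => by
    have hne := hG _ _ (List.isChain_iff_getElem.1 hp i hi)
    rw [Nat.even_add_one, ← hG.side_getElem_eq_iff_even hp (by omega)]
    revert hne
    cases side p[i] <;> cases side p[i + 1] <;> cases side p[0] <;> simp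

namespace IsAltPath

variable {G : SimpleGraph V} {M : Set (Sym2 V)} {u v : V} {p : List V}

theorem ne_nil (h : IsAltPath G M u v p) : p ≠ [] := by
  rintro rfl
  simpa using h.2.2.2.1

theorem length_pos (h : IsAltPath G M u v p) : 0 < p.length :=
  List.length_pos_iff.2 h.ne_nil

theorem getElem_zero (h : IsAltPath G M u v p) : p[0]'h.length_pos = u := by
  simpa [List.head?_eq_getElem?, h.length_pos] using h.2.2.2.1

theorem getElem_length_sub_one (h : IsAltPath G M u v p) :
    p[p.length - 1]'(by have := h.length_pos; omega) = v := by
  simpa [List.getLast?_eq_getElem?, h.length_pos] using h.2.2.2.2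

theorem nodup (h : IsAltPath G M u v p) : p.Nodup := h.2.1

theorem isChain_adj (h : IsAltPath G M u v p) : p.IsChain G.Adj := h.1

theorem adj (h : IsAltPath G M u v p) {i : ℕ} (hi : i + 1 < p.length) : G.Adj p[i] p[i + 1] :=
  List.isChain_iff_getElem.1 h.isChain_adj i hi

theorem mem_iff_notMem (h : IsAltPath G M u v p) {i : ℕ} (hi : i + 2 < p.length) :
    s(p[i], p[i + 1]) ∈ M ↔ s(p[i + 1], p[i + 2]) ∉ M := by
  have := List.isChain_iff_getElem.1 h.2.2.1 i (by rw [length_pathEdges]; omega)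
  rwa [getElem_pathEdges, getElem_pathEdges] at this

theorem mem_iff_odd (h : IsAltPath G M u v p) (hu : ¬ IsMatchedBy M u) :
    ∀ {i} (hi : i + 1 < p.length), s(p[i], p[i + 1]) ∈ M ↔ Odd i
  | 0, _ => by
    simp only [Nat.not_odd_zero, iff_false]
    exact fun hM => hu ⟨_, hM, h.getElem_zero ▸ Sym2.mem_mk_left _ _⟩
  | i + 1, hi => by
    rw [Nat.odd_add_one, ← h.mem_iff_odd hu (by omega), h.mem_iff_notMem hi, not_not]

theorem of_getElem (hne : p ≠ []) (hnd : p.Nodup) (h0 : p[0]'(List.length_pos_iff.2 hne) = u)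
    (hlast : p[p.length - 1]'(by have := List.length_pos_iff.2 hne; omega) = v)
    (hadj : ∀ i (hi : i + 1 < p.length), G.Adj p[i] p[i + 1])
    (halt : ∀ i (hi : i + 2 < p.length),
      s(p[i], p[i + 1]) ∈ M ↔ s(p[i + 1], p[i + 2]) ∉ M) :
    IsAltPath G M u v p := by
  refine ⟨List.isChain_iff_getElem.2 hadj, hnd,
    List.isChain_iff_getElem.2 fun i hi => ?_, ?_, ?_⟩
  · rw [length_pathEdges] at hi
    rw [getElem_pathEdges, getElem_pathEdges]
    exact halt i (by omega)
  · simp [List.head?_eq_getElem?, List.length_pos_iff.2 hne, h0]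
  · simp [List.getLast?_eq_getElem?, List.length_pos_iff.2 hne, hlast]

theorem take (h : IsAltPath G M u v p) {t : ℕ} (ht : t < p.length) :
    IsAltPath G M u p[t] (p.take (t + 1)) := by
  have hlen : (p.take (t + 1)).length = t + 1 := by simp; omega
  refine of_getElem (by rw [← List.length_pos_iff, hlen]; omega)
    (h.nodup.sublist (List.take_sublist _ _))
    ?_ ?_ (fun i hi => ?_) (fun i hi => ?_)
  · simpa using h.getElem_zero
  · simp [hlen]
  · simpa using h.adj (by simp at hi; omega)
  · simpa using h.mem_iff_notMem (by simp at hi; omega)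

theorem concat (h : IsAltPath G M u v p) (hu : ¬ IsMatchedBy M u) {y : V} (hvy : G.Adj v y)
    (hy : y ∉ p) (hpar : s(v, y) ∈ M ↔ Odd (p.length - 1)) :
    IsAltPath G M u y (p ++ [y]) := by
  have hpos := h.length_pos
  have hlast := h.getElem_length_sub_one
  have hlen : (p ++ [y]).length = p.length + 1 := by simp
  have hget : ∀ i (hi : i < p.length), (p ++ [y])[i]'(by omega) = p[i] := fun i hi =>
    List.getElem_append_left hi
  have hgety : (p ++ [y])[p.length] = y := by simp
  refine of_getElem (by simp)
    (List.nodup_append.2 ⟨h.nodup, List.nodup_singleton _, fun a ha b hb hab => hy (by simp_all)⟩)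
    (by rw [hget 0 hpos, h.getElem_zero]) (by simp [hgety]) (fun i hi => ?_) (fun i hi => ?_)
  · rw [hlen] at hi
    rw [hget i (by omega)]
    rcases Nat.lt_or_ge (i + 1) p.length with hi' | hi'
    · rw [hget (i + 1) hi']
      exact h.adj hi'
    · obtain rfl : i = p.length - 1 := by omega
      simpa [Nat.sub_add_cancel hpos, hgety, hlast] using hvy
  · rw [hlen] at hi
    rw [hget i (by omega), hget (i + 1) (by omega)]
    rcases Nat.lt_or_ge (i + 2) p.length with hi' | hi'
    · rw [hget (i + 2) hi']
      exact h.mem_iff_notMem hi'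
    · obtain rfl : i = p.length - 2 := by omega
      have hv : p[p.length - 2 + 1] = v := by
        simp only [show p.length - 2 + 1 = p.length - 1 by omega, hlast]
      simp only [show p.length - 2 + 2 = p.length by omega, hgety, hv]
      rw [← hv, h.mem_iff_odd hu, hv, hpar]
      rw [show p.length - 1 = p.length - 2 + 1 by omega, Nat.odd_add_one, not_not]

theorem exists_odd_of_getElem_mem (h : IsAltPath G M u v p) (hM : IsMatchingIn G M)
    (hu : ¬ IsMatchedBy M u) {e : Sym2 V} (he : e ∈ M) {i : ℕ} (hi : i < p.length)
    (hie : p[i] ∈ e) (hi0 : i ≠ 0) (hlast : Odd i → i + 1 < p.length) :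
    ∃ j, ∃ hj : j + 1 < p.length, Odd j ∧ s(p[j], p[j + 1]) = e := by
  rcases Nat.even_or_odd i with hev | hodd
  · obtain ⟨j, rfl⟩ := Nat.exists_eq_add_one_of_ne_zero hi0
    have hj : Odd j := by simpa [Nat.even_add_one] using hev
    exact ⟨j, hi, hj,
      hM.eq_of_mem_of_mem ((h.mem_iff_odd hu hi).2 hj) he (Sym2.mem_mk_right _ _) hie⟩
  · exact ⟨i, hlast hodd, hodd,
      hM.eq_of_mem_of_mem ((h.mem_iff_odd hu _).2 hodd) he (Sym2.mem_mk_left _ _) hie⟩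

theorem mem_pathEdges_of_getElem_mem (hp : IsAltPath G M u v p) (hM : IsMatchingIn G M)
    (hu : ¬ IsMatchedBy M u) (hv : ¬ IsMatchedBy M v) {e : Sym2 V} (he : e ∈ M) {i : ℕ}
    (hi : i < p.length) (hie : p[i] ∈ e) : e ∈ pathEdges p := by
  have hi0 : i ≠ 0 := by
    rintro rfl
    exact hu ⟨e, he, hp.getElem_zero ▸ hie⟩
  have hiL : i ≠ p.length - 1 := by
    rintro rfl
    exact hv ⟨e, he, hp.getElem_length_sub_one ▸ hie⟩
  obtain ⟨j, hj, -, rfl⟩ :=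
    hp.exists_odd_of_getElem_mem hM hu he hi hie hi0 (fun _ => by omega)
  exact mem_pathEdges_iff.2 ⟨j, hj, rfl⟩

theorem isMatchingIn_symmDiff (hp : IsAltPath G M u v p) (hM : IsMatchingIn G M)
    (hu : ¬ IsMatchedBy M u) (hv : ¬ IsMatchedBy M v) :
    IsMatchingIn G (M ∆ {e | e ∈ pathEdges p}) := by
  have hmixed : ∀ e ∈ M, ∀ f ∈ pathEdges p, ∀ w ∈ e, w ∈ f → e ∈ pathEdges p := by
    intro e he f hf w hwe hwf
    obtain ⟨i, hi, rfl⟩ := mem_pathEdges_iff.1 hf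
    rcases Sym2.mem_iff.1 hwf with rfl | rfl
    · exact hp.mem_pathEdges_of_getElem_mem hM hu hv he _ hwe
    · exact hp.mem_pathEdges_of_getElem_mem hM hu hv he _ hwe
  refine ⟨fun e he => ?_, fun e he f hf hne w hwe hwf => ?_⟩
  · rcases Set.mem_symmDiff.1 he with ⟨heM, -⟩ | ⟨heP, -⟩
    · exact hM.1 heM
    · obtain ⟨i, hi, rfl⟩ := mem_pathEdges_iff.1 heP
      exact hp.adj hi
  rcases Set.mem_symmDiff.1 he with ⟨heM, heP⟩ | ⟨heP, heM⟩ <;>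
    rcases Set.mem_symmDiff.1 hf with ⟨hfM, hfP⟩ | ⟨hfP, hfM⟩
  · exact hM.2 e heM f hfM hne w hwe hwf
  · exact heP (hmixed e heM f hfP w hwe hwf)
  · exact hfP (hmixed f hfM e heP w hwf hwe)
  · -- two path edges outside `M` sit at even positions, so they cannot be consecutive
    obtain ⟨i, hi, rfl⟩ := mem_pathEdges_iff.1 heP
    obtain ⟨j, hj, rfl⟩ := mem_pathEdges_iff.1 hfP
    have hi' := mt (hp.mem_iff_odd hu hi).2 heM
    have hj' := mt (hp.mem_iff_odd hu hj).2 hfM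
    rw [Nat.not_odd_iff] at hi' hj'
    have hij : i = j := by
      rw [Sym2.mem_iff] at hwe hwf
      rcases hwe with rfl | rfl <;> rcases hwf with h | h <;>
        rw [hp.nodup.getElem_inj_iff] at h <;> omega
    subst hij
    exact hne rfl

theorem ncard_lt_ncard_symmDiff [Finite V] (hp : IsAltPath G M u v p) (hM : IsMatchingIn G M)
    (hu : ¬ IsMatchedBy M u) (hv : ¬ IsMatchedBy M v) (hodd : Odd (pathEdges p).length) :
    M.ncard < (M ∆ {e | e ∈ pathEdges p}).ncard := by
  set M' := M ∆ {e | e ∈ pathEdges p}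
  rw [length_pathEdges, Nat.odd_iff] at hodd
  have hpath : ∀ i (hi : i < p.length), IsMatchedBy M' p[i] := by
    intro i hi
    -- the path edge at `p[i]` outside `M` is the one at the even position among `i - 1, i`
    obtain ⟨j, hj, hjM, hij⟩ : ∃ j, ∃ hj : j + 1 < p.length, s(p[j], p[j + 1]) ∉ M ∧
        p[i] ∈ s(p[j], p[j + 1]) := by
      rcases Nat.even_or_odd i with hev | hodd'
      · refine ⟨i, by rw [Nat.even_iff] at hev; omega, ?_, Sym2.mem_mk_left _ _⟩
        rw [hp.mem_iff_odd hu]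
        exact Nat.not_odd_iff_even.2 hev
      · obtain ⟨k, rfl⟩ := hodd'
        refine ⟨2 * k, hi, ?_, Sym2.mem_mk_right _ _⟩
        rw [hp.mem_iff_odd hu]
        simp
    exact ⟨_, Set.mem_symmDiff.2 (Or.inr ⟨mem_pathEdges_iff.2 ⟨j, hj, rfl⟩, hjM⟩), hij⟩
  have hsub : {x | IsMatchedBy M x} ⊂ {x | IsMatchedBy M' x} := by
    refine (Set.ssubset_iff_of_subset fun x hx => ?_).2
      ⟨u, hp.getElem_zero ▸ hpath 0 hp.length_pos, hu⟩
    obtain ⟨e, he, hxe⟩ := hx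
    by_cases heP : e ∈ pathEdges p
    · obtain ⟨i, hi, rfl⟩ := mem_pathEdges_iff.1 heP
      rcases Sym2.mem_iff.1 hxe with rfl | rfl
      · exact hpath i (by omega)
      · exact hpath (i + 1) hi
    · exact ⟨e, Set.mem_symmDiff.2 (Or.inl ⟨he, heP⟩), hxe⟩
  have := Set.ncard_lt_ncard hsub
  rw [hM.ncard_setOf_isMatchedBy, (hp.isMatchingIn_symmDiff hM hu hv).ncard_setOf_isMatchedBy]
    at this
  exact Nat.lt_of_mul_lt_mul_left this

end IsAltPath

section Parity

variable {G : SimpleGraph V} {M : Set (Sym2 V)} {side : V → Bool} {x y : V}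

theorem EvenVtx.of_not_isMatchedBy (hx : ¬ IsMatchedBy M x) : EvenVtx G M x :=
  ⟨x, [x], hx, ⟨List.isChain_singleton _, List.nodup_singleton _, List.IsChain.nil, rfl, rfl⟩,
    by simp [pathEdges]⟩

theorem EvenVtx.oddVtx_of_adj_of_notMem (hG : IsBipartiteWith G side) (hx : EvenVtx G M x)
    (hxy : G.Adj x y) (hxyM : s(x, y) ∉ M) : OddVtx G M y := by
  obtain ⟨u, p, hu, hp, hev⟩ := hx
  rw [length_pathEdges] at hev
  have hpos := hp.length_pos
  by_cases hy : y ∈ p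
  · obtain ⟨t, ht, rfl⟩ := List.getElem_of_mem hy
    have ht' : ¬ Even t := fun htev => hG _ _ hxy <| by
      rw [← hp.getElem_length_sub_one, (hG.side_getElem_eq_iff_even hp.isChain_adj _).2 hev,
        (hG.side_getElem_eq_iff_even hp.isChain_adj ht).2 htev]
    refine ⟨u, _, hu, hp.take ht, ?_⟩
    rw [length_pathEdges, List.length_take, Nat.min_eq_left (by omega), Nat.add_sub_cancel]
    exact Nat.not_even_iff_odd.1 ht'
  · refine ⟨u, _, hu, hp.concat hu hxy hy (by simpa [hxyM] using hev), ?_⟩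
    rw [length_pathEdges, List.length_append, List.length_singleton, Nat.add_sub_cancel,
      ← Nat.sub_add_cancel hpos]
    exact hev.add_one

theorem OddVtx.evenVtx_of_mem (hM : IsMatchingIn G M) (hx : OddVtx G M x) (hxy : s(x, y) ∈ M) :
    EvenVtx G M y := by
  obtain ⟨u, p, hu, hp, hodd⟩ := hx
  rw [length_pathEdges] at hodd
  have hpos := hp.length_pos
  have hxp := hp.getElem_length_sub_one
  by_cases hy : y ∈ p
  · exfalso
    obtain ⟨t, ht, rfl⟩ := List.getElem_of_mem hy
    have ht0 : t ≠ 0 := by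
      rintro rfl
      exact hu ⟨_, hxy, hp.getElem_zero ▸ Sym2.mem_mk_right _ _⟩
    have htL : t ≠ p.length - 1 := by
      rintro rfl
      exact (hM.1 hxy).ne hxp.symm
    obtain ⟨j, hj, hjodd, hje⟩ :=
      hp.exists_odd_of_getElem_mem hM hu hxy ht (Sym2.mem_mk_right _ _) ht0 (fun _ => by omega)
    have hxj : p[p.length - 1] ∈ s(p[j], p[j + 1]) := hje ▸ hxp ▸ Sym2.mem_mk_left _ _
    rw [Sym2.mem_iff, hp.nodup.getElem_inj_iff, hp.nodup.getElem_inj_iff] at hxj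
    rcases hxj with hxj | hxj
    · omega
    · rw [hxj] at hodd
      exact Nat.not_even_iff_odd.2 hodd hjodd.add_one
  · refine ⟨u, _, hu, hp.concat hu (hM.1 hxy) hy (by simpa [hxy] using hodd), ?_⟩
    rw [length_pathEdges, List.length_append, List.length_singleton, Nat.add_sub_cancel,
      ← Nat.sub_add_cancel hpos]
    exact hodd.add_one

theorem EvenVtx.oddVtx_of_mem (hM : IsMatchingIn G M) (hx : EvenVtx G M x) (hxy : s(x, y) ∈ M) :
    OddVtx G M y := by
  obtain ⟨u, p, hu, hp, hev⟩ := hx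
  rw [length_pathEdges] at hev
  have hpos := hp.length_pos
  have hxp := hp.getElem_length_sub_one
  have hL0 : p.length - 1 ≠ 0 := by
    intro hL0
    simp only [hL0, hp.getElem_zero] at hxp
    exact hu ⟨_, hxy, hxp ▸ Sym2.mem_mk_left _ _⟩
  obtain ⟨j, hj, hjodd, hje⟩ := hp.exists_odd_of_getElem_mem hM hu hxy (by omega)
    (by rw [hxp]; exact Sym2.mem_mk_left _ _) hL0 (fun h => absurd hev (Nat.not_even_iff_odd.2 h))
  have hxj : p[p.length - 1] ∈ s(p[j], p[j + 1]) := hje ▸ hxp ▸ Sym2.mem_mk_left _ _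
  rw [Sym2.mem_iff, hp.nodup.getElem_inj_iff, hp.nodup.getElem_inj_iff] at hxj
  obtain rfl : y = p[j] := by
    rcases hxj with hxj | hxj
    · omega
    · have hx' : p[j + 1] = x := by simpa only [hxj] using hxp
      exact hM.eq_of_mk_mem hxy (by rw [Sym2.eq_swap, ← hx', hje]; exact hxy)
  refine ⟨u, _, hu, hp.take (by omega : j < p.length), ?_⟩
  rw [length_pathEdges, List.length_take, Nat.min_eq_left (by omega), Nat.add_sub_cancel]
  exact hjodd

theorem EvenVtx.oddVtx_of_adj (hG : IsBipartiteWith G side) (hM : IsMatchingIn G M)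
    (hx : EvenVtx G M x) (hxy : G.Adj x y) : OddVtx G M y := by
  by_cases hxyM : s(x, y) ∈ M
  · exact hx.oddVtx_of_mem hM hxyM
  · exact hx.oddVtx_of_adj_of_notMem hG hxy hxyM

theorem OddVtx.isMatchedBy [Finite V] (hM : IsMaxMatching G M) (hx : OddVtx G M x) :
    IsMatchedBy M x := by
  by_contra hxM
  obtain ⟨u, p, hu, hp, hodd⟩ := hx
  exact (hp.ncard_lt_ncard_symmDiff hM.1 hu hxM hodd).not_ge
    (hM.2 _ (hp.isMatchingIn_symmDiff hM.1 hu hxM))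

theorem IsAltPath.not_oddVtx_getElem [Finite V] {u v : V} {p : List V}
    (hp : IsAltPath G M u v p) (hG : IsBipartiteWith G side) (hM : IsMaxMatching G M)
    (hu : ¬ IsMatchedBy M u) : ∀ {t} (ht : t < p.length), Even t → ¬ OddVtx G M p[t]
  | 0, _, _, hodd => hu (hp.getElem_zero ▸ hodd.isMatchedBy hM)
  | 1, _, h1, _ => Nat.not_even_one h1
  | t + 2, ht, hev, hodd => by
    have ht : Even t := by simpa [Nat.even_add] using hev
    have hnext : EvenVtx G M p[t + 1] := hodd.evenVtx_of_mem hM.1 <| by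
      rw [Sym2.eq_swap, hp.mem_iff_odd hu]
      exact ht.add_one
    have hprev : OddVtx G M p[t] := hnext.oddVtx_of_adj_of_notMem hG (hp.adj _).symm <| by
      rw [Sym2.eq_swap, hp.mem_iff_odd hu]
      exact Nat.not_odd_iff_even.2 ht
    exact hp.not_oddVtx_getElem hG hM hu (by omega) ht hprev

theorem EvenVtx.not_oddVtx [Finite V] (hG : IsBipartiteWith G side) (hM : IsMaxMatching G M)
    (hx : EvenVtx G M x) : ¬ OddVtx G M x := by
  obtain ⟨u, p, hu, hp, hev⟩ := hx
  rw [length_pathEdges] at hev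
  rw [← hp.getElem_length_sub_one]
  exact hp.not_oddVtx_getElem hG hM hu _ hev

end Parity

/-- In every maximum matching `N`, every odd vertex (odd with respect
to a fixed maximum matching `M`) is matched, and its partner in `N` is even. -/
theorem odd_vertex_matched_to_even [Fintype V]
    (G : SimpleGraph V) (side : V → Bool) (hbip : IsBipartiteWith G side)
    (M : Set (Sym2 V)) (hM : IsMaxMatching G M)
    (N : Set (Sym2 V)) (hN : IsMaxMatching G N)
    (v : V) (hv : OddVtx G M v) :
    IsMatchedBy N v ∧ ∀ w, s(v, w) ∈ N → EvenVtx G M w := by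
  set O := {x | OddVtx G M x}
  set E := {x | EvenVtx G M x}
  have hOE : Disjoint O E := Set.disjoint_right.2 fun x hxE hxO => hxE.not_oddVtx hbip hM hxO
  have hMlower : 2 * O.ncard + (O ∪ E)ᶜ.ncard ≤ 2 * M.ncard := by
    refine hM.1.le_two_mul_ncard hOE (fun x hx => ?_) (fun x hx => ?_)
    · obtain ⟨y, hxy⟩ := isMatchedBy_iff.1 (hx.isMatchedBy hM)
      exact ⟨y, hx.evenVtx_of_mem hM.1 hxy, hxy⟩
    · by_contra hxM
      exact hx (Or.inr (EvenVtx.of_not_isMatchedBy hxM))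
  have hNupper := hN.1.two_mul_ncard_add_le (S := O) (T := E)
    fun x hx y hxy => hx.oddVtx_of_adj hbip hM.1 (hN.1.1 hxy)
  have hMN := hN.2 M hM.1
  obtain ⟨w, hwE, hvw⟩ : ∃ w ∈ E, s(v, w) ∈ N := by
    by_contra h
    have := (Set.ncard_pos (s := O \ {x | ∃ y ∈ E, s(x, y) ∈ N})).2 ⟨v, hv, h⟩
    omega
  exact ⟨⟨_, hvw, Sym2.mem_mk_left _ _⟩, fun w' hw' => hN.1.eq_of_mk_mem hvw hw' ▸ hwE⟩
end

section
/- Let G be a bipartite graph, M a maximum matching in G, and 𝓔, 𝓤 the sets of even and unreachable vertices with respect to M. Then G contains no edge with one endpoint in 𝓔 and the other endpoint in 𝓔 ∪ 𝓤. -/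
open SimpleGraph

variable {V : Type*}

/-!
Let `v` be even and `w` adjacent to `v`. Then `w` is odd: either `w` already lies on the even
alternating path to `v`, necessarily at an odd position, or that path extends by the edge `vw`,
which is not in `M` because the matching edge at `v` is the last edge of the path. In particular
`w` is reachable. If `w` were also even, the even and the odd path to `w` would start at unmatched
vertices on different sides of the bipartition; following the odd one until it first meets the
even one and splicing gives an augmenting path, which contradicts maximality by Berge's lemma.
-/

variable {G : SimpleGraph V} {M : Set (Sym2 V)} {side : V → Bool}

@[simp] lemma pathEdges_nil : pathEdges ([] : List V) = [] := rfl

@[simp] lemma pathEdges_singleton (a : V) : pathEdges [a] = [] := rfl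

@[simp] lemma pathEdges_cons_cons (a b : V) (l : List V) :
    pathEdges (a :: b :: l) = s(a, b) :: pathEdges (b :: l) := rfl

lemma mem_of_mem_pathEdges {p : List V} {e : Sym2 V} {x : V} (he : e ∈ pathEdges p)
    (hx : x ∈ e) : x ∈ p := by
  simp only [pathEdges, List.mem_map] at he
  obtain ⟨⟨a, b⟩, hab, rfl⟩ := he
  obtain ⟨ha, hb⟩ := List.of_mem_zip hab
  rcases Sym2.mem_iff.1 hx with rfl | rfl
  · exact ha
  · exact List.mem_of_mem_tail hb

lemma IsBipartiteWith.side_eq_iff (hbip : IsBipartiteWith G side) {x y : V} (h : G.Adj x y)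
    (b : Bool) : side x = b ↔ side y ≠ b := by
  have := hbip x y h
  revert this
  cases side x <;> cases side y <;> cases b <;> decide

lemma isMatchedBy_insert {e : Sym2 V} {x : V} :
    IsMatchedBy (insert e M) x ↔ x ∈ e ∨ IsMatchedBy M x := by
  simp [IsMatchedBy]

lemma IsMatchedBy.mono {N : Set (Sym2 V)} {x : V} (h : IsMatchedBy N x) (hNM : N ⊆ M) :
    IsMatchedBy M x :=
  let ⟨e, he, hx⟩ := h; ⟨e, hNM he, hx⟩

namespace IsMatchingIn

lemma eq_of_mem (hM : IsMatchingIn G M) {e f : Sym2 V} {x : V} (he : e ∈ M) (hf : f ∈ M)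
    (hxe : x ∈ e) (hxf : x ∈ f) : e = f :=
  by_contra fun hne => hM.2 e he f hf hne x hxe hxf

lemma mono (hM : IsMatchingIn G M) {N : Set (Sym2 V)} (hNM : N ⊆ M) : IsMatchingIn G N :=
  ⟨hNM.trans hM.1, fun e he f hf => hM.2 e (hNM he) f (hNM hf)⟩

lemma insert (hM : IsMatchingIn G M) {e : Sym2 V} (he : e ∈ G.edgeSet)
    (hfree : ∀ x ∈ e, ¬IsMatchedBy M x) : IsMatchingIn G (insert e M) := by
  refine ⟨Set.insert_subset he hM.1, ?_⟩
  rintro f (rfl | hf) g (rfl | hg) hne x hxf hxg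
  · exact hne rfl
  · exact hfree x hxf ⟨g, hg, hxg⟩
  · exact hfree x hxg ⟨f, hf, hxf⟩
  · exact hM.2 f hf g hg hne x hxf hxg

lemma not_isMatchedBy_sdiff (hM : IsMatchingIn G M) {e : Sym2 V} {x : V} (he : e ∈ M)
    (hx : x ∈ e) : ¬IsMatchedBy (M \ {e}) x :=
  fun ⟨_, ⟨hf, hfe⟩, hxf⟩ => hfe (hM.eq_of_mem hf he hxf hx)

lemma not_isMatchedBy_insert_sdiff (hM : IsMatchingIn G M) {e f : Sym2 V} {x : V} (hf : f ∈ M)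
    (hxe : x ∉ e) (hx : x ∈ f ∨ ¬IsMatchedBy M x) :
    ¬IsMatchedBy (Insert.insert e (M \ {f})) x := by
  rw [isMatchedBy_insert]
  rintro (h | h)
  · exact hxe h
  · rcases hx with hx | hx
    · exact hM.not_isMatchedBy_sdiff hf hx h
    · exact hx (h.mono Set.sdiff_subset)

lemma insert_sdiff (hM : IsMatchingIn G M) {u c d : V} (huc : G.Adj u c) (hu : ¬IsMatchedBy M u)
    (hcd : s(c, d) ∈ M) : IsMatchingIn G (Insert.insert s(u, c) (M \ {s(c, d)})) := by
  refine (hM.mono Set.sdiff_subset).insert huc ?_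
  intro x hx
  rcases Sym2.mem_iff.1 hx with rfl | rfl
  · exact fun h => hu (h.mono Set.sdiff_subset)
  · exact hM.not_isMatchedBy_sdiff hcd (Sym2.mem_mk_left _ _)

end IsMatchingIn

lemma IsAltPath.tail {u z a b : V} {t : List V} (hp : IsAltPath G M u z (a :: b :: t)) :
    IsAltPath G M b z (b :: t) :=
  ⟨List.IsChain.tail hp.1, hp.2.1.of_cons, List.IsChain.tail hp.2.2.1, rfl,
    by simpa using hp.2.2.2.2⟩

lemma IsAltPath.congr {M' : Set (Sym2 V)} {u v : V} {p : List V} (hp : IsAltPath G M u v p)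
    (h : ∀ e ∈ pathEdges p, e ∈ M ↔ e ∈ M') : IsAltPath G M' u v p := by
  obtain ⟨hadj, hnd, halt, hu, hv⟩ := hp
  refine ⟨hadj, hnd, ?_, hu, hv⟩
  refine List.IsChain.imp_of_mem_imp (fun e f he hf hef => ?_) halt
  rwa [← h e he, ← h f hf]

/-- One direction of Berge's lemma, by induction: the path shortens by trading its first two
edges. -/
theorem IsMatchingIn.exists_ncard_lt_of_isAltPath {M : Set (Sym2 V)} (hM : IsMatchingIn G M)
    (hfin : M.Finite) : ∀ {u z : V} {p : List V}, IsAltPath G M u z p → ¬IsMatchedBy M u →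
      ¬IsMatchedBy M z → u ≠ z → ∃ N, IsMatchingIn G N ∧ M.ncard < N.ncard
  | _, _, [], ⟨_, _, _, hu, _⟩, _, _, _ => by simp at hu
  | _, _, [_], ⟨_, _, _, hu, hz⟩, _, _, huz => by simp_all
  | u, z, [a, c], ⟨hadj, _, _, hu, hz⟩, hufree, hzfree, _ => by
    simp only [List.head?_cons, Option.some.injEq, List.getLast?_cons_cons,
      List.getLast?_singleton] at hu hz
    subst hu hz
    have hac : s(a, c) ∉ M := fun h => hufree ⟨_, h, Sym2.mem_mk_left _ _⟩
    refine ⟨Insert.insert s(a, c) M, hM.insert (List.isChain_pair.1 hadj) ?_, ?_⟩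
    · intro x hx
      rcases Sym2.mem_iff.1 hx with rfl | rfl <;> assumption
    · rw [Set.ncard_insert_of_notMem hac hfin]
      omega
  | u, z, a :: c :: d :: t, hp@⟨hadj, hnd, halt, hu, _⟩, hufree, hzfree, _ => by
    simp only [List.head?_cons, Option.some.injEq] at hu
    subst hu
    replace hadj : G.Adj a c := (List.isChain_cons_cons.1 hadj).1
    replace halt : s(a, c) ∈ M ↔ s(c, d) ∉ M := (List.isChain_cons_cons.1 halt).1
    rw [List.nodup_cons, List.nodup_cons] at hnd
    have hzt : z ∈ d :: t := List.mem_of_getLast? hp.tail.tail.2.2.2.2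
    have hout : ∀ x ∈ d :: t, x ∉ s(a, c) := fun x hx h => by
      rcases Sym2.mem_iff.1 h with rfl | rfl
      exacts [hnd.1 (List.mem_cons_of_mem _ hx), hnd.2.1 hx]
    have hac : s(a, c) ∉ M := fun h => hufree ⟨_, h, Sym2.mem_mk_left _ _⟩
    have hcd : s(c, d) ∈ M := by tauto
    set M' := Insert.insert s(a, c) (M \ {s(c, d)})
    have hcard : M'.ncard = M.ncard := by
      rw [Set.ncard_insert_of_notMem (fun h => hac h.1) hfin.sdiff,
        Set.ncard_sdiff_singleton_add_one hcd hfin]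
    have hp' : IsAltPath G M' d z (d :: t) := hp.tail.tail.congr fun e he => by
      have hce : c ∉ e := fun h => hnd.2.1 (mem_of_mem_pathEdges he h)
      have h₁ : e ≠ s(a, c) := by rintro rfl; exact hce (Sym2.mem_mk_right _ _)
      have h₂ : e ≠ s(c, d) := by rintro rfl; exact hce (Sym2.mem_mk_left _ _)
      simp [M', h₁, h₂]
    have hdz : d ≠ z := by
      rintro rfl
      exact hzfree ⟨_, hcd, Sym2.mem_mk_right _ _⟩
    obtain ⟨N, hN, hlt⟩ := (hM.insert_sdiff hadj hufree hcd).exists_ncard_lt_of_isAltPath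
      (hfin.sdiff.insert _) hp'
      (hM.not_isMatchedBy_insert_sdiff hcd (hout d List.mem_cons_self)
        (Or.inl (Sym2.mem_mk_right _ _)))
      (hM.not_isMatchedBy_insert_sdiff hcd (hout z hzt) (Or.inr hzfree)) hdz
    exact ⟨N, hN, hcard ▸ hlt⟩

/-- In a bipartite graph, an alternating path that starts at an unmatched vertex on side `b`
uses an edge of `M` exactly when it steps onto side `b`; this makes alternation a condition on
consecutive vertices, stable under taking prefixes, reversing and splicing. -/
def AltStep (G : SimpleGraph V) (M : Set (Sym2 V)) (side : V → Bool) (b : Bool) (x y : V) :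
    Prop :=
  G.Adj x y ∧ (s(x, y) ∈ M ↔ side y = b)

lemma AltStep.swap (hbip : IsBipartiteWith G side) {b : Bool} {x y : V}
    (h : AltStep G M side b x y) : AltStep G M side (!b) y x := by
  refine ⟨h.1.symm, ?_⟩
  rw [Sym2.eq_swap, h.2]
  have := hbip x y h.1
  revert this
  cases side x <;> cases side y <;> cases b <;> decide

lemma even_length_pathEdges_iff (hbip : IsBipartiteWith G side) :
    ∀ {a v : V} {t : List V}, (a :: t).IsChain G.Adj → (a :: t).getLast? = some v →
      (Even (pathEdges (a :: t)).length ↔ side v = side a)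
  | _, _, [], _, hv => by simp_all
  | a, v, y :: t, h, hv => by
    rw [List.isChain_cons_cons] at h
    rw [pathEdges_cons_cons, List.length_cons, Nat.even_add_one,
      even_length_pathEdges_iff hbip h.2 (by simpa using hv)]
    have := hbip.side_eq_iff h.1 (side v)
    tauto

lemma IsAltPath.even_length_iff (hbip : IsBipartiteWith G side) {u v : V} {p : List V}
    (hp : IsAltPath G M u v p) : Even (pathEdges p).length ↔ side v = side u := by
  obtain ⟨hadj, -, -, hu, hv⟩ := hp
  obtain ⟨t, rfl⟩ := List.head?_eq_some_iff.1 hu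
  exact even_length_pathEdges_iff hbip hadj hv

lemma isChain_altStep_of_isChain (hbip : IsBipartiteWith G side) {b : Bool} :
    ∀ {a : V} {t : List V}, (a :: t).IsChain G.Adj →
      (pathEdges (a :: t)).IsChain (fun e f => e ∈ M ↔ f ∉ M) →
      (∀ y ∈ t.head?, s(a, y) ∈ M ↔ side y = b) → (a :: t).IsChain (AltStep G M side b)
  | _, [], _, _, _ => List.isChain_singleton _
  | a, y :: t, hadj, halt, hfirst => by
    rw [List.isChain_cons_cons] at hadj ⊢
    refine ⟨⟨hadj.1, hfirst y rfl⟩,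
      isChain_altStep_of_isChain hbip hadj.2 halt.tail fun z hz => ?_⟩
    obtain ⟨t, rfl⟩ := List.head?_eq_some_iff.1 (Option.mem_def.1 hz)
    rw [pathEdges_cons_cons, pathEdges_cons_cons, List.isChain_cons_cons] at halt
    have := hbip.side_eq_iff (List.isChain_cons_cons.1 hadj.2).1 b
    have := hfirst y rfl
    tauto

lemma IsAltPath.isChain_altStep (hbip : IsBipartiteWith G side) {u v : V} {p : List V}
    (hp : IsAltPath G M u v p) (hu : ¬IsMatchedBy M u) :
    p.IsChain (AltStep G M side (side u)) := by
  obtain ⟨hadj, -, halt, hhead, -⟩ := hp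
  obtain ⟨t, rfl⟩ := List.head?_eq_some_iff.1 hhead
  refine isChain_altStep_of_isChain hbip hadj halt fun y hy => ?_
  obtain ⟨t, rfl⟩ := List.head?_eq_some_iff.1 (Option.mem_def.1 hy)
  have huy : G.Adj u y := (List.isChain_cons_cons.1 hadj).1
  exact iff_of_false (fun h => hu ⟨_, h, Sym2.mem_mk_left _ _⟩) (hbip u y huy).symm

lemma isChain_pathEdges_of_isChain_altStep (hbip : IsBipartiteWith G side) {b : Bool} :
    ∀ {p : List V}, p.IsChain (AltStep G M side b) →
      (pathEdges p).IsChain (fun e f => e ∈ M ↔ f ∉ M)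
  | [], _ | [_], _ | [_, _], _ => by simp
  | x :: y :: z :: t, h => by
    rw [pathEdges_cons_cons, pathEdges_cons_cons, List.isChain_cons_cons]
    refine ⟨?_, isChain_pathEdges_of_isChain_altStep hbip h.tail⟩
    simp only [List.isChain_cons_cons] at h
    have := hbip.side_eq_iff h.2.1.1 b
    have := h.1.2
    have := h.2.1.2
    tauto

lemma isAltPath_of_isChain_altStep (hbip : IsBipartiteWith G side) {b : Bool} {u v : V}
    {p : List V} (hp : p.IsChain (AltStep G M side b)) (hnd : p.Nodup) (hu : p.head? = some u)
    (hv : p.getLast? = some v) : IsAltPath G M u v p :=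
  ⟨hp.imp fun _ _ h => h.1, hnd, isChain_pathEdges_of_isChain_altStep hbip hp, hu, hv⟩

/-- The matching edge at the end `v` of an even alternating path is its last edge. -/
lemma IsMatchingIn.mem_of_isChain_altStep (hM : IsMatchingIn G M) {b : Bool} {u v w : V}
    {p : List V} (hp : p.IsChain (AltStep G M side b)) (hu : p.head? = some u)
    (hfree : ¬IsMatchedBy M u) (hv : p.getLast? = some v) (hvb : side v = b)
    (hvw : s(v, w) ∈ M) : w ∈ p := by
  obtain ⟨l, rfl⟩ := List.getLast?_eq_some_iff.1 hv
  rcases List.eq_nil_or_concat l with rfl | ⟨l, x, rfl⟩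
  · simp only [List.nil_append, List.head?_cons, Option.some.injEq] at hu
    exact absurd ⟨_, hvw, hu ▸ Sym2.mem_mk_left _ _⟩ hfree
  · simp only [List.concat_eq_append, List.append_assoc, List.cons_append,
      List.nil_append] at hp ⊢
    have hxv := (List.isChain_append_cons_cons.1 hp).2.1
    have hxw := hM.eq_of_mem ((hxv.2).2 hvb) hvw (Sym2.mem_mk_right _ _) (Sym2.mem_mk_left _ _)
    have : x = w := by
      rcases Sym2.eq_iff.1 hxw with ⟨rfl, rfl⟩ | ⟨rfl, -⟩ <;> rfl
    simp [this]

theorem oddVtx_of_adj_evenVtx (hbip : IsBipartiteWith G side) (hM : IsMatchingIn G M)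
    {v w : V} (hvw : G.Adj v w) (hv : EvenVtx G M v) : OddVtx G M w := by
  obtain ⟨u, p, hu, hp, hev⟩ := hv
  have hvu : side v = side u := (hp.even_length_iff hbip).1 hev
  have hwu : side w ≠ side u := hvu ▸ (hbip v w hvw).symm
  have hc := hp.isChain_altStep hbip hu
  suffices ∃ q, IsAltPath G M u w q by
    obtain ⟨q, hq⟩ := this
    exact ⟨u, q, hu, hq, Nat.not_even_iff_odd.1 fun h => hwu ((hq.even_length_iff hbip).1 h)⟩
  obtain ⟨-, hnd, -, hhead, hlast⟩ := hp
  by_cases hwp : w ∈ p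
  · obtain ⟨s, t, rfl⟩ := List.append_of_mem hwp
    have hsplit : s ++ w :: t = (s ++ [w]) ++ t := by simp
    rw [hsplit] at hc hnd hhead
    refine ⟨s ++ [w], isAltPath_of_isChain_altStep hbip hc.left_of_append
      (hnd.sublist (List.sublist_append_left _ _)) ?_ (by simp)⟩
    simpa [List.head?_append] using hhead
  · have hvw' : s(v, w) ∉ M := fun h =>
      hwp (hM.mem_of_isChain_altStep hc hhead hu hlast hvu h)
    refine ⟨p ++ [w], isAltPath_of_isChain_altStep hbip
      (hc.append (List.isChain_singleton w) ?_) ?_ ?_ (by simp)⟩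
    · simp only [hlast, Option.mem_def, Option.some.injEq, List.head?_cons]
      rintro _ rfl _ rfl
      exact ⟨hvw, iff_of_false hvw' hwu⟩
    · simp only [List.nodup_append, hnd, List.nodup_singleton, List.mem_singleton, true_and]
      rintro a ha _ rfl rfl
      exact hwp ha
    · simp [List.head?_append, hhead]

/-- The path is the segment of `p` from `u₁` to the first vertex `y` of `q` lying on `p`,
followed by the segment of `q` from `y` back to `u₂`. -/
lemma exists_isAltPath_of_isChain_altStep (hbip : IsBipartiteWith G side) {b : Bool}
    {u₁ u₂ : V} {p q : List V} (hp : p.IsChain (AltStep G M side b)) (hpn : p.Nodup)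
    (hpu : p.head? = some u₁) (hq : q.IsChain (AltStep G M side (!b))) (hqn : q.Nodup)
    (hqu : q.head? = some u₂) (hmeet : ∃ x ∈ q, x ∈ p) :
    ∃ r, IsAltPath G M u₁ u₂ r := by
  classical
  obtain ⟨y, hy⟩ := Option.isSome_iff_exists.1 (List.find?_isSome (p := (· ∈ p)).2
    (by simpa using hmeet))
  obtain ⟨hyp, q₁, q₂, rfl, hq₁⟩ := List.find?_eq_some_iff_append.1 hy
  obtain ⟨p₁, p₂, rfl⟩ := List.append_of_mem (by simpa using hyp)
  have hqsplit : q₁ ++ y :: q₂ = (q₁ ++ [y]) ++ q₂ := by simp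
  rw [hqsplit] at hq hqn hqu
  have hback : (y :: q₁.reverse).IsChain (AltStep G M side b) := by
    have := List.isChain_reverse.2 (hq.left_of_append.imp fun _ _ h => h.swap hbip)
    simpa using this
  refine ⟨p₁ ++ y :: q₁.reverse, isAltPath_of_isChain_altStep hbip (b := b) ?_ ?_ ?_ ?_⟩
  · refine (hp.left_of_append).append hback ?_
    simpa using (List.isChain_append.1 hp).2.2
  · rw [List.nodup_append] at hpn ⊢
    have hqy : (q₁ ++ [y]).Nodup := hqn.sublist (List.sublist_append_left _ _)
    refine ⟨hpn.1, by simpa using List.nodup_reverse.2 hqy, ?_⟩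
    rintro a ha c hc rfl
    simp only [List.mem_cons, List.mem_reverse] at hc
    rcases hc with rfl | hc
    · exact hpn.2.2 a ha a List.mem_cons_self rfl
    · simpa [ha] using hq₁ a hc
  · simpa [List.head?_append] using hpu
  · rw [show p₁ ++ y :: q₁.reverse = p₁ ++ (q₁ ++ [y]).reverse by simp,
      List.getLast?_append_of_ne_nil _ (by simp), List.getLast?_reverse]
    simpa [List.head?_append] using hqu

theorem not_oddVtx_of_evenVtx (hbip : IsBipartiteWith G side) (hM : IsMaxMatching G M)
    (hfin : M.Finite) {x : V} (hx : EvenVtx G M x) : ¬OddVtx G M x := by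
  rintro ⟨u₂, q, hu₂, hq, hodd⟩
  obtain ⟨u₁, p, hu₁, hp, hev⟩ := hx
  have hside₁ : side x = side u₁ := (hp.even_length_iff hbip).1 hev
  have hside₂ : side x ≠ side u₂ := fun h =>
    Nat.not_even_iff_odd.2 hodd ((hq.even_length_iff hbip).2 h)
  have hside : side u₂ = !side u₁ := by
    revert hside₁ hside₂
    cases side x <;> cases side u₁ <;> cases side u₂ <;> decide
  obtain ⟨r, hr⟩ := exists_isAltPath_of_isChain_altStep hbip (hp.isChain_altStep hbip hu₁)
    hp.2.1 hp.2.2.2.1 (hside ▸ hq.isChain_altStep hbip hu₂) hq.2.1 hq.2.2.2.1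
    ⟨x, List.mem_of_getLast? hq.2.2.2.2, List.mem_of_getLast? hp.2.2.2.2⟩
  obtain ⟨N, hN, hlt⟩ := hM.1.exists_ncard_lt_of_isAltPath hfin hr hu₁ hu₂ (by
    rintro rfl
    cases h : side u₁ <;> simp [h] at hside)
  exact (hM.2 N hN).not_gt hlt

/-- `G` contains no edge with one endpoint even and the other endpoint
even or unreachable (labels taken with respect to a maximum matching `M`). -/
theorem no_edge_even_evenUnreachable [Fintype V]
    (G : SimpleGraph V) (side : V → Bool) (hbip : IsBipartiteWith G side)
    (M : Set (Sym2 V)) (hM : IsMaxMatching G M) :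
    ∀ v w, G.Adj v w → EvenVtx G M v →
      ¬ (EvenVtx G M w ∨ UnreachableVtx G M w) := by
  intro v w hvw hv
  have hw : OddVtx G M w := oddVtx_of_adj_evenVtx hbip hM.1 hvw hv
  rintro (hw' | hw')
  · exact not_oddVtx_of_evenVtx hbip hM (Set.toFinite M) hw' hw
  · obtain ⟨u, p, hu, hp, -⟩ := hw
    exact hw' ⟨u, p, hu, hp⟩
end
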